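/- arXiv:2304.03904 — 8 statements merged into one kernel-verified Lean document; each statement's English description precedes it below -/
import Mathlib

section
/- For all real numbers x and x₀ with x₀ ≠ 0, log(1 + exp(x)) ≤ log(1 + exp(x₀)) + (x − x₀)/2 + (tanh(x₀/2)/(4·x₀))·(x² − x₀²). (This is the quadratic tangent bound underlying the Pólya-Gamma EM minorization of the logistic log-likelihood.) -/
/-!
Since `1 + exp x = 2 exp (x / 2) cosh (x / 2)`, the bound is equivalent to
`log (cosh t) ≤ log (cosh t₀) + tanh t₀ / (2 t₀) * (t ^ 2 - t₀ ^ 2)` with `t = x / 2`, `t₀ = x₀ / 2`.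
Both sides are even, so take `t, t₀ ≥ 0`. The derivative of `log ∘ cosh` is `tanh`, and `tanh` is
concave on `[0, ∞)` with `tanh 0 = 0`, so `tanh t / t` decreases there. Hence
`tanh t₀ / (2 t₀) * t ^ 2 - log (cosh t)`, whose derivative is `t * (tanh t₀ / t₀ - tanh t / t)`,
decreases on `[0, t₀]` and increases on `[t₀, ∞)`, so it is minimal at `t₀`.
-/

open Set

namespace Real

theorem hasDerivAt_tanh (x : ℝ) : HasDerivAt tanh (1 / cosh x ^ 2) x := by
  rw [show tanh = sinh / cosh from funext tanh_eq_sinh_div_cosh]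
  refine ((hasDerivAt_sinh x).div (hasDerivAt_cosh x) (cosh_pos x).ne').congr_deriv ?_
  rw [← pow_two, ← pow_two, cosh_sq_sub_sinh_sq]

theorem concaveOn_tanh_Ici : ConcaveOn ℝ (Ici 0) tanh := by
  refine AntitoneOn.concaveOn_of_deriv (convex_Ici 0)
    (fun x _ => (hasDerivAt_tanh x).continuousAt.continuousWithinAt)
    (fun x _ => (hasDerivAt_tanh x).differentiableAt.differentiableWithinAt) ?_
  intro a ha b hb hab
  rw [interior_Ici] at ha hb
  rw [(hasDerivAt_tanh a).deriv, (hasDerivAt_tanh b).deriv]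
  have hcosh : cosh a ≤ cosh b := by
    rw [cosh_le_cosh, abs_of_pos ha, abs_of_pos hb]
    exact hab
  gcongr

theorem antitoneOn_tanh_div_Ioi : AntitoneOn (fun x => tanh x / x) (Ioi 0) := by
  intro a ha b hb hab
  have h := concaveOn_tanh_Ici.neg.secant_mono (a := 0) self_mem_Ici (Ioi_subset_Ici_self ha)
    (Ioi_subset_Ici_self hb) (ne_of_gt ha) (ne_of_gt hb) hab
  simp only [Pi.neg_apply, tanh_zero, neg_zero, sub_zero, neg_div] at h
  exact neg_le_neg_iff.mp h

theorem log_cosh_quadratic_bound_of_pos {t₀ t : ℝ} (ht₀ : 0 < t₀) (ht : 0 ≤ t) :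
    log (cosh t) ≤ log (cosh t₀) + tanh t₀ / (2 * t₀) * (t ^ 2 - t₀ ^ 2) := by
  set c := tanh t₀ / t₀
  let F : ℝ → ℝ := fun v => c / 2 * v ^ 2 - log (cosh v)
  have hF (v : ℝ) : HasDerivAt F (c * v - tanh v) v := by
    refine (((hasDerivAt_pow 2 v).const_mul (c / 2)).sub
      ((hasDerivAt_cosh v).log (cosh_pos v).ne')).congr_deriv ?_
    rw [tanh_eq_sinh_div_cosh]
    ring
  have hFcont : Continuous F := continuous_iff_continuousAt.mpr fun v => (hF v).continuousAt
  suffices F t₀ ≤ F t by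
    have hc : tanh t₀ / (2 * t₀) = c / 2 := by simp only [c]; ring
    simp only [F] at this
    rw [hc]
    linarith
  rcases le_total t₀ t with h | h
  · refine monotoneOn_of_hasDerivWithinAt_nonneg (convex_Ici t₀) hFcont.continuousOn
      (fun v _ => (hF v).hasDerivWithinAt) (fun v hv => ?_) self_mem_Ici h h
    rw [interior_Ici] at hv
    have hv0 : 0 < v := ht₀.trans hv
    have := antitoneOn_tanh_div_Ioi ht₀ hv0 hv.le
    rw [div_le_iff₀ hv0] at this
    linarith
  · refine antitoneOn_of_hasDerivWithinAt_nonpos (convex_Icc 0 t₀) hFcont.continuousOn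
      (fun v _ => (hF v).hasDerivWithinAt) (fun v hv => ?_) ⟨ht, h⟩ ⟨ht₀.le, le_rfl⟩ h
    rw [interior_Icc] at hv
    have := antitoneOn_tanh_div_Ioi hv.1 ht₀ hv.2.le
    rw [le_div_iff₀ hv.1] at this
    linarith

theorem log_cosh_quadratic_bound {t₀ : ℝ} (ht₀ : t₀ ≠ 0) (t : ℝ) :
    log (cosh t) ≤ log (cosh t₀) + tanh t₀ / (2 * t₀) * (t ^ 2 - t₀ ^ 2) := by
  have h := log_cosh_quadratic_bound_of_pos (abs_pos.mpr ht₀) (abs_nonneg t)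
  have heven : tanh |t₀| / (2 * |t₀|) = tanh t₀ / (2 * t₀) := by
    rcases abs_choice t₀ with h | h <;> rw [h]
    rw [tanh_neg, mul_neg, neg_div_neg_eq]
  rwa [cosh_abs, cosh_abs, sq_abs, sq_abs, heven] at h

theorem log_one_add_exp_eq (x : ℝ) :
    log (1 + exp x) = x / 2 + log 2 + log (cosh (x / 2)) := by
  have h : 1 + exp x = exp (x / 2) * (2 * cosh (x / 2)) := by
    rw [cosh_eq, mul_div_cancel₀ _ two_ne_zero, mul_add, ← exp_add, ← exp_add]
    rw [add_halves, add_neg_cancel, exp_zero, add_comm]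
  rw [h, log_mul (exp_pos _).ne' (by positivity), log_exp,
    log_mul two_ne_zero (cosh_pos _).ne']
  ring

end Real

open Real in
/-- Quadratic tangent bound underlying the Pólya-Gamma EM minorization of the
logistic log-likelihood. -/
theorem log_one_add_exp_quadratic_bound (x x₀ : ℝ) (hx₀ : x₀ ≠ 0) :
    Real.log (1 + Real.exp x) ≤ Real.log (1 + Real.exp x₀) + (x - x₀) / 2
      + (Real.tanh (x₀ / 2) / (4 * x₀)) * (x ^ 2 - x₀ ^ 2) := by
  have h := log_cosh_quadratic_bound (div_ne_zero hx₀ two_ne_zero) (x / 2)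
  have hcoeff : tanh (x₀ / 2) / (2 * (x₀ / 2)) * ((x / 2) ^ 2 - (x₀ / 2) ^ 2)
      = tanh (x₀ / 2) / (4 * x₀) * (x ^ 2 - x₀ ^ 2) := by
    field_simp
    ring
  rw [log_one_add_exp_eq x, log_one_add_exp_eq x₀]
  linarith
end

section
/- For all real x, log(1 + exp(x)) ≤ log 2 + x/2 + x²/8. (This is the uniform-curvature quadratic bound used in the MM algorithm for logistic regression, corresponding to the weight bound ω(t,1) ≤ 1/4.) -/
/-- Uniform-curvature quadratic bound used in the MM algorithm for logistic
regression, corresponding to the weight bound ω(t,1) ≤ 1/4. -/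
theorem log_one_add_exp_mm_bound (x : ℝ) :
    Real.log (1 + Real.exp x) ≤ Real.log 2 + x / 2 + x ^ 2 / 8 := by
  have h1 : (1 : ℝ) + Real.exp x = 2 * Real.cosh (x / 2) * Real.exp (x / 2) := by
    rw [Real.cosh_eq]
    have h1 : Real.exp x = Real.exp (x/2) * Real.exp (x/2) := by
      rw [← Real.exp_add]; ring_nf
    have h2 : Real.exp (-(x/2)) * Real.exp (x/2) = 1 := by
      rw [← Real.exp_add]; simp
    nlinarith [h1, h2]
  have hc : 0 < Real.cosh (x / 2) := Real.cosh_pos _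
  rw [h1, Real.log_mul (by positivity) (Real.exp_ne_zero _),
    Real.log_mul (by norm_num) hc.ne', Real.log_exp]
  have h2 : Real.log (Real.cosh (x / 2)) ≤ x ^ 2 / 8 := by
    calc Real.log (Real.cosh (x / 2)) ≤ Real.log (Real.exp ((x / 2) ^ 2 / 2)) :=
          Real.log_le_log hc (Real.cosh_le_exp_half_sq _)
      _ = x ^ 2 / 8 := by rw [Real.log_exp]; ring
  linarith
end

section
/- For every real x ≠ 0, tanh(x/2)/(2x) > exp(x)/(1 + exp(x))². That is, the Pólya-Gamma EM weight function strictly dominates the Newton-Raphson weight function π(x)(1 − π(x)) away from zero, where π(x) = 1/(1 + exp(−x)). -/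
open Real

lemma em_key (y : ℝ) (hy : 0 < y) :
    Real.tanh (y / 2) / (2 * y) > Real.exp y / (1 + Real.exp y) ^ 2 := by
  have hs : y < Real.sinh y := Real.self_lt_sinh_iff.2 hy
  rw [Real.sinh_eq] at hs
  have hinv : Real.exp (-y) = 1 / Real.exp y := by
    rw [Real.exp_neg]; ring
  rw [hinv] at hs
  have hE : Real.exp y > 0 := Real.exp_pos y
  -- tanh(y/2) = (exp y - 1)/(exp y + 1)
  have ht : Real.tanh (y / 2) = (Real.exp y - 1) / (Real.exp y + 1) := by
    rw [Real.tanh_eq_sinh_div_cosh, Real.sinh_eq, Real.cosh_eq, Real.exp_neg]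
    have h2 : Real.exp (y / 2) * Real.exp (y / 2) = Real.exp y := by
      rw [← Real.exp_add]; ring_nf
    have hE2 : Real.exp (y / 2) > 0 := Real.exp_pos _
    rw [div_div_div_cancel_right₀]
    rw [div_eq_div_iff (by positivity) (by positivity)]
    field_simp
    linear_combination 2 * h2
    norm_num
  rw [ht]
  rw [gt_iff_lt, div_lt_div_iff₀ (by positivity) (by positivity)]
  have h4 : 2 * y < Real.exp y - 1 / Real.exp y := by linarith
  have h5 := mul_lt_mul_of_pos_right h4 hE
  have h6 : (Real.exp y - 1 / Real.exp y) * Real.exp y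
      = Real.exp y * Real.exp y - 1 := by field_simp
  have h3 : Real.exp y * Real.exp y - 1 > 2 * y * Real.exp y := by
    rw [h6] at h5; linarith
  rw [div_mul_eq_mul_div, lt_div_iff₀ (by positivity)]
  nlinarith [h3]

/-- The Pólya-Gamma EM weight function strictly dominates the Newton-Raphson
weight function π(x)(1 − π(x)) = exp(x)/(1 + exp(x))² away from zero. -/
theorem em_weight_gt_nr_weight (x : ℝ) (hx : x ≠ 0) :
    Real.tanh (x / 2) / (2 * x) > Real.exp x / (1 + Real.exp x) ^ 2 := by
  rcases hx.lt_or_gt with h | h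
  · have key := em_key (-x) (by linarith)
    have h1 : Real.tanh (-x / 2) = -Real.tanh (x / 2) := by
      rw [neg_div, Real.tanh_neg]
    have h2 : Real.exp (-x) / (1 + Real.exp (-x)) ^ 2
        = Real.exp x / (1 + Real.exp x) ^ 2 := by
      rw [Real.exp_neg]
      have hE : Real.exp x > 0 := Real.exp_pos x
      field_simp
      ring
    rw [h1, h2] at key
    calc Real.exp x / (1 + Real.exp x) ^ 2
        < -Real.tanh (x / 2) / (2 * -x) := key
      _ = Real.tanh (x / 2) / (2 * x) := by rw [mul_neg, neg_div_neg_eq]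
  · exact em_key x h
end

section
/- Let X be an n×p real matrix with rows xᵢ, S = diag(s₁,…,sₙ), W(β) = diag(ω(xᵢᵀβ, mᵢ)), u ∈ ℝⁿ with uᵢ = yᵢ − mᵢ/2, and μ(Xβ) ∈ ℝⁿ with i-th entry mᵢ/(1 + exp(−xᵢᵀβ)). If the p×p matrix XᵀSW(β)X is invertible, then (XᵀSW(β)X)⁻¹XᵀSu = β + (XᵀSW(β)X)⁻¹XᵀS(y − μ(Xβ)). That is, the EM parameter update for weighted logistic regression can be written as the current value plus a reweighted-least-squares correction involving the residual y − μ(Xβ). -/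
/-!
Since tanh(t/2) = 2/(1 + e^{-t}) − 1, the weight satisfies ω(t, m)·t = m/(1 + e^{-t}) − m/2, so
u = W(β)Xβ + (y − μ(Xβ)). Applying (XᵀSW(β)X)⁻¹XᵀS to both summands, the first returns β.
-/

open Matrix

/-- The Pólya-Gamma EM weight function: ω(t,m) = (m/(2t))·tanh(t/2) for t ≠ 0,
and ω(0,m) = m/4. -/
noncomputable def omegaPG (t m : ℝ) : ℝ :=
  if t = 0 then m / 4 else m / (2 * t) * Real.tanh (t / 2)

theorem Real.tanh_half (t : ℝ) : tanh (t / 2) = 2 / (1 + exp (-t)) - 1 := by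
  have hexp : exp (-t) = exp (-(t / 2)) * exp (-(t / 2)) := by
    rw [← exp_add]; ring_nf
  have hprod : exp (t / 2) * exp (-(t / 2)) = 1 := by rw [← exp_add]; simp
  rw [tanh_eq, hexp]
  field_simp
  linear_combination 2 * exp (-(t / 2)) * hprod

theorem omegaPG_mul_self (t m : ℝ) :
    omegaPG t m * t = m / (1 + Real.exp (-t)) - m / 2 := by
  rcases eq_or_ne t 0 with rfl | ht
  · norm_num [omegaPG]
  · rw [omegaPG, if_neg ht, Real.tanh_half]
    field_simp

theorem diagonal_omegaPG_mulVec {ι : Type*} [Fintype ι] [DecidableEq ι] (η m : ι → ℝ) :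
    diagonal (fun i => omegaPG (η i) (m i)) *ᵥ η
      = fun i => m i / (1 + Real.exp (-η i)) - m i / 2 := by
  ext i
  rw [mulVec_diagonal, omegaPG_mul_self]

theorem Matrix.nonsing_inv_mul_mulVec_mulVec_add {m n K : Type*} [Fintype m] [DecidableEq m]
    [Fintype n] [CommRing K] (B : Matrix m n K) (C : Matrix n m K) (hBC : IsUnit (B * C))
    (β : m → K) (r : n → K) :
    (B * C)⁻¹ *ᵥ (B *ᵥ (C *ᵥ β + r)) = β + (B * C)⁻¹ *ᵥ (B *ᵥ r) := by
  rw [mulVec_add, mulVec_add, mulVec_mulVec, mulVec_mulVec, Matrix.mul_assoc,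
    nonsing_inv_mul _ ((isUnit_iff_isUnit_det _).mp hBC), one_mulVec]

/-- The EM parameter update for weighted logistic regression,
(XᵀSW(β)X)⁻¹XᵀSu, equals the current value plus a reweighted-least-squares
correction involving the residual y − μ(Xβ). -/
theorem em_update_eq_current_plus_correction (n p : ℕ)
    (X : Matrix (Fin n) (Fin p) ℝ) (s m y : Fin n → ℝ) (β : Fin p → ℝ)
    (hinv : IsUnit (Xᵀ * Matrix.diagonal s
      * Matrix.diagonal (fun i => omegaPG ((X *ᵥ β) i) (m i)) * X)) :
    (Xᵀ * Matrix.diagonal s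
        * Matrix.diagonal (fun i => omegaPG ((X *ᵥ β) i) (m i)) * X)⁻¹
      *ᵥ ((Xᵀ * Matrix.diagonal s) *ᵥ fun i => y i - m i / 2)
    = β + (Xᵀ * Matrix.diagonal s
        * Matrix.diagonal (fun i => omegaPG ((X *ᵥ β) i) (m i)) * X)⁻¹
      *ᵥ ((Xᵀ * Matrix.diagonal s)
        *ᵥ (y - fun i => m i / (1 + Real.exp (-(X *ᵥ β) i)))) := by
  set W := diagonal fun i => omegaPG ((X *ᵥ β) i) (m i)
  have hsplit : (fun i => y i - m i / 2)
      = (W * X) *ᵥ β + (y - fun i => m i / (1 + Real.exp (-(X *ᵥ β) i))) := by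
    rw [← mulVec_mulVec, diagonal_omegaPG_mulVec]
    ext i
    simp only [Pi.add_apply, Pi.sub_apply]
    ring
  have hassoc : Xᵀ * diagonal s * W * X = Xᵀ * diagonal s * (W * X) := Matrix.mul_assoc _ _ _
  rw [hassoc] at hinv ⊢
  rw [hsplit, nonsing_inv_mul_mulVec_mulVec_add _ _ hinv]
end

section
/- For every real c ≠ 0, the series Σ_{k=1}^{∞} 1/((k − 1/2)² + c²/(4π²)) converges and equals (π²/c)·tanh(c/2). (Consequently, the mean of a Pólya-Gamma PG(b,c) random variable, which by its defining infinite Gamma convolution equals (b/(2π²))·Σ_{k=1}^{∞} 1/((k − 1/2)² + c²/(4π²)), is (b/(2c))·tanh(c/2).) -/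
/-!
The tangent has the partial-fraction expansion `π tan (π x) = ∑ₙ 2x / ((n + 1/2)² - x²)`. It
follows from Mathlib's Mittag-Leffler expansion of the cotangent through
`tan z = cot z - 2 cot (2z)`: the odd-indexed terms of the cotangent series at `2x` form the
cotangent series at `x`, so the difference of the two is the sum of the even-indexed terms.
At `x = a i` one has `tan (π a i) = i tanh (π a)`, which turns this into a real series; the
theorem is the case `a = c / (2π)`.
-/

open Complex Real

namespace Complex

theorem tan_eq_cot_sub_two_mul_cot {z : ℂ} (hs : sin z ≠ 0) (hc : cos z ≠ 0) :
    tan z = cot z - 2 * cot (2 * z) := by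
  rw [tan_eq_sin_div_cos, cot_eq_cos_div_sin, cot_eq_cos_div_sin, sin_two_mul, cos_two_mul']
  field_simp
  ring

theorem hasSum_pi_mul_cot_sub_inv {x : ℂ} (hx : x ∈ integerComplement) :
    HasSum (fun n : ℕ => 2 * x / (x ^ 2 - (n + 1) ^ 2)) (π * cot (π * x) - 1 / x) := by
  refine ((summable_cotTerm hx).hasSum_iff_tendsto_nat.mpr
    (tendsto_logDeriv_euler_cot_sub hx)).congr_fun fun n => ?_
  rw [cotTerm_identity hx n]
  field_simp
  ring

theorem hasSum_pi_mul_tan {x : ℂ} (hx : 2 * x ∈ integerComplement) :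
    HasSum (fun n : ℕ => 2 * x / ((n + 1 / 2) ^ 2 - x ^ 2)) (π * tan (π * x)) := by
  have hx' : x ∈ integerComplement := fun ⟨n, hn⟩ => hx ⟨2 * n, by push_cast; rw [hn]⟩
  have hsin : sin (π * x) ≠ 0 := sin_pi_mul_ne_zero hx'
  have hcos : cos (π * x) ≠ 0 := by
    rw [Ne, cos_eq_zero_iff]
    rintro ⟨k, hk⟩
    refine hx ⟨2 * k + 1, ?_⟩
    have hπ : (π : ℂ) ≠ 0 := ofReal_ne_zero.mpr pi_ne_zero
    push_cast
    field_simp at hk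
    linear_combination -hk
  set f : ℕ → ℂ := fun m => 2 * x / (x ^ 2 - ((m + 1) / 2) ^ 2)
  have hall : HasSum f (2 * (π * cot (π * (2 * x)) - 1 / (2 * x))) :=
    ((hasSum_pi_mul_cot_sub_inv hx).mul_left 2).congr_fun fun m => by
      simp only [f]
      field_simp
  have hodd : HasSum (fun n => f (2 * n + 1)) (π * cot (π * x) - 1 / x) :=
    (hasSum_pi_mul_cot_sub_inv hx').congr_fun fun n => by
      simp only [f]
      push_cast
      ring_nf
  obtain ⟨S, heven⟩ : Summable fun n => f (2 * n) :=
    hall.summable.comp_injective (mul_right_injective₀ two_ne_zero)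
  have hsum := (heven.even_add_odd hodd).unique hall
  have htan : π * tan (π * x) = -S := by
    rw [tan_eq_cot_sub_two_mul_cot hsin hcos, mul_left_comm 2 (π : ℂ) x]
    linear_combination hsum
  rw [htan]
  exact heven.neg.congr_fun fun n => by
    simp only [f]
    rw [← div_neg, neg_sub]
    push_cast
    ring

end Complex

theorem Real.hasSum_one_div_add_half_sq_add_sq {a : ℝ} (ha : a ≠ 0) :
    HasSum (fun n : ℕ => 1 / ((n + 1 / 2) ^ 2 + a ^ 2)) (π * Real.tanh (π * a) / (2 * a)) := by
  have hx : 2 * (a * I) ∈ integerComplement := fun ⟨n, hn⟩ => by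
    simpa [ha] using congrArg im hn
  have hterm (n : ℕ) : 2 * (a * I) / ((n + 1 / 2) ^ 2 - (a * I) ^ 2) =
      ((2 * a * (1 / ((n + 1 / 2) ^ 2 + a ^ 2)) : ℝ) : ℂ) * I := by
    have hden :
        ((n : ℂ) + 1 / 2) ^ 2 - (a * I) ^ 2 = (((n + 1 / 2) ^ 2 + a ^ 2 : ℝ) : ℂ) := by
      push_cast
      rw [mul_pow, I_sq]
      ring
    rw [hden]
    push_cast
    ring
  have hval : π * Complex.tan (π * (a * I)) =
      ((2 * a * (π * Real.tanh (π * a) / (2 * a)) : ℝ) : ℂ) * I := by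
    rw [← mul_assoc, tan_mul_I, mul_div_cancel₀ _ (mul_ne_zero two_ne_zero ha)]
    push_cast
    ring
  have h := hasSum_pi_mul_tan hx
  simp only [hterm, hval, hasSum_mul_right_iff I_ne_zero, hasSum_ofReal] at h
  exact (hasSum_mul_left_iff (mul_ne_zero two_ne_zero ha)).mp h

/-- For c ≠ 0, Σ_{k=1}^{∞} 1/((k − 1/2)² + c²/(4π²)) converges and equals
(π²/c)·tanh(c/2), whence the mean of a PG(b,c) random variable is
(b/(2c))·tanh(c/2). -/
theorem pg_mean_series (c : ℝ) (hc : c ≠ 0) :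
    Summable (fun k : ℕ =>
      1 / (((k : ℝ) + 1 - 1 / 2) ^ 2 + c ^ 2 / (4 * Real.pi ^ 2))) ∧
    ∑' k : ℕ, 1 / (((k : ℝ) + 1 - 1 / 2) ^ 2 + c ^ 2 / (4 * Real.pi ^ 2))
      = Real.pi ^ 2 / c * Real.tanh (c / 2) := by
  have hπ : π ≠ 0 := pi_ne_zero
  have h := Real.hasSum_one_div_add_half_sq_add_sq (div_ne_zero hc (mul_ne_zero two_ne_zero hπ))
  have hseries : HasSum (fun k : ℕ => 1 / (((k : ℝ) + 1 - 1 / 2) ^ 2 + c ^ 2 / (4 * π ^ 2)))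
      (π ^ 2 / c * Real.tanh (c / 2)) := by
    convert h using 1
    · funext k
      ring
    · rw [show π * (c / (2 * π)) = c / 2 by field_simp]
      field_simp
  exact ⟨hseries.summable, hseries.tsum_eq⟩
end

section
/- Let X be an n×p real matrix with rows xᵢ, S = diag(s₁,…,sₙ) with sᵢ ≥ 0, βₜ ∈ ℝᵖ, counts mᵢ, responses yᵢ, uᵢ = yᵢ − mᵢ/2, W(βₜ) = diag(ω(xᵢᵀβₜ, mᵢ)), μ(Xβₜ)ᵢ = mᵢ/(1 + exp(−xᵢᵀβₜ)), and κ > 0. Suppose XᵀSX is invertible and H = XᵀS(κIₙ − W(βₜ))X. Then the maximizer of Q̃(β) = βᵀXᵀSu − (1/2)βᵀXᵀSW(βₜ)Xβ − (1/2)(β − βₜ)ᵀH(β − βₜ) over β ∈ ℝᵖ is β′ = βₜ + κ⁻¹(XᵀSX)⁻¹XᵀS(y − μ(Xβₜ)); equivalently, β′ = κ⁻¹(XᵀSX)⁻¹XᵀS·b where b = u + (κIₙ − W(βₜ))Xβₜ. This identifies the GPX-ECME step with this choice of H as the MM-algorithm update for logistic regression. -/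
open Matrix

lemma omega_mul (t m : ℝ) : omegaPG t m * t = m/(1 + Real.exp (-t)) - m/2 := by
  unfold omegaPG
  rcases eq_or_ne t 0 with h | h
  · simp [h]; ring
  · rw [if_neg h, Real.tanh_eq_sinh_div_cosh, Real.sinh_eq, Real.cosh_eq]
    have h1 : Real.exp (-t) = (Real.exp (t/2))⁻¹ * (Real.exp (t/2))⁻¹ := by
      rw [← Real.exp_neg, ← Real.exp_add]; ring_nf
    have h3 : Real.exp (-(t/2)) = (Real.exp (t/2))⁻¹ := by rw [← Real.exp_neg]
    have p1 := Real.exp_pos (t/2)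
    have den : (0:ℝ) < 1 + Real.exp (-t) := by positivity
    have den2 : (0:ℝ) < Real.exp (t/2) + Real.exp (-(t/2)) := by positivity
    rw [h1] at den ⊢
    rw [h3] at den2 ⊢
    field_simp
    ring

lemma symm_dot {k : ℕ} (M : Matrix (Fin k) (Fin k) ℝ) (hM : Mᵀ = M)
    (x y : Fin k → ℝ) : x ⬝ᵥ (M *ᵥ y) = y ⬝ᵥ (M *ᵥ x) := by
  rw [Matrix.dotProduct_mulVec, ← Matrix.mulVec_transpose, hM, dotProduct_comm]

/-- With H = XᵀS(κIₙ − W(βₜ))X, the maximizer of the GPX-ECME surrogate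
Q̃(β) = βᵀXᵀSu − (1/2)βᵀXᵀSW(βₜ)Xβ − (1/2)(β − βₜ)ᵀH(β − βₜ) is
β′ = βₜ + κ⁻¹(XᵀSX)⁻¹XᵀS(y − μ(Xβₜ)); equivalently
β′ = κ⁻¹(XᵀSX)⁻¹XᵀS·(u + (κIₙ − W(βₜ))Xβₜ) — the MM-algorithm update. -/
theorem gpxecme_step_is_mm_update (n p : ℕ) (X : Matrix (Fin n) (Fin p) ℝ)
    (s m y : Fin n → ℝ) (hs : ∀ i, 0 ≤ s i) (βt : Fin p → ℝ) (κ : ℝ)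
    (hκ : 0 < κ) (hinv : IsUnit (Xᵀ * Matrix.diagonal s * X)) :
    let S := Matrix.diagonal s
    let W := Matrix.diagonal fun i => omegaPG ((X *ᵥ βt) i) (m i)
    let u := fun i => y i - m i / 2
    let μ := fun i => m i / (1 + Real.exp (-(X *ᵥ βt) i))
    let H := Xᵀ * S * (κ • (1 : Matrix (Fin n) (Fin n) ℝ) - W) * X
    let Qt := fun β : Fin p → ℝ =>
      β ⬝ᵥ ((Xᵀ * S) *ᵥ u) - (1 / 2) * (β ⬝ᵥ ((Xᵀ * S * W * X) *ᵥ β))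
        - (1 / 2) * ((β - βt) ⬝ᵥ (H *ᵥ (β - βt)))
    let β' := βt + κ⁻¹ • ((Xᵀ * S * X)⁻¹ *ᵥ ((Xᵀ * S) *ᵥ (y - μ)))
    (∀ β : Fin p → ℝ, Qt β ≤ Qt β') ∧
      β' = κ⁻¹ • ((Xᵀ * S * X)⁻¹ *ᵥ ((Xᵀ * S)
        *ᵥ (u + (κ • (1 : Matrix (Fin n) (Fin n) ℝ) - W) *ᵥ (X *ᵥ βt)))) := by
  intro S W u μ H Qt β'
  set A := Xᵀ * S * X with hA
  have hdet : IsUnit A.det := (Matrix.isUnit_iff_isUnit_det _).mp hinv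
  have hAinv : A⁻¹ * A = 1 := Matrix.nonsing_inv_mul _ hdet
  have hAinv' : A * A⁻¹ = 1 := Matrix.mul_nonsing_inv _ hdet
  have hκ0 : κ ≠ 0 := ne_of_gt hκ
  -- symmetry facts
  have hSW : S * W = W * S := by
    simp only [S, W, Matrix.diagonal_mul_diagonal, mul_comm]
  have hAsym : Aᵀ = A := by
    simp [hA, Matrix.transpose_mul, S, Matrix.diagonal_transpose, Matrix.mul_assoc]
  have hK : S * (κ • (1 : Matrix (Fin n) (Fin n) ℝ) - W)
      = (κ • (1 : Matrix (Fin n) (Fin n) ℝ) - W) * S := by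
    rw [Matrix.mul_sub, Matrix.sub_mul, hSW, Matrix.mul_smul, Matrix.smul_mul,
      mul_one, one_mul]
  have hHsym : Hᵀ = H := by
    have hWt : (κ • (1 : Matrix (Fin n) (Fin n) ℝ) - W)ᵀ
        = κ • (1 : Matrix (Fin n) (Fin n) ℝ) - W := by
      simp [W, Matrix.transpose_sub, Matrix.transpose_smul, Matrix.diagonal_transpose]
    simp only [H, Matrix.transpose_mul, Matrix.transpose_transpose, hWt,
      Matrix.diagonal_transpose, S, Matrix.mul_assoc]
    congr 1
    rw [← Matrix.mul_assoc, ← Matrix.mul_assoc, hK]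
  -- the vector identity y - μ = u - W (X βt)
  have hyμ : y - μ = u - W *ᵥ (X *ᵥ βt) := by
    funext i
    have := omega_mul ((X *ᵥ βt) i) (m i)
    simp only [Pi.sub_apply, μ, u, W, Matrix.mulVec_diagonal]
    linarith
  -- the target vector c
  set c : Fin p → ℝ := (Xᵀ * S) *ᵥ (u + (κ • (1 : Matrix (Fin n) (Fin n) ℝ) - W)
    *ᵥ (X *ᵥ βt)) with hc
  -- key: κ • (A *ᵥ β') = c
  have hAA : ∀ w : Fin p → ℝ, A *ᵥ (A⁻¹ *ᵥ w) = w := fun w => by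
    rw [Matrix.mulVec_mulVec, hAinv', Matrix.one_mulVec]
  have hAA' : ∀ w : Fin p → ℝ, A⁻¹ *ᵥ (A *ᵥ w) = w := fun w => by
    rw [Matrix.mulVec_mulVec, hAinv, Matrix.one_mulVec]
  have hβ'd : β' = βt + κ⁻¹ • ((Xᵀ * S * X)⁻¹ *ᵥ ((Xᵀ * S) *ᵥ (y - μ))) := rfl
  have hkey : κ • (A *ᵥ β') = c := by
    have h1 : A *ᵥ β' = A *ᵥ βt + κ⁻¹ • ((Xᵀ * S) *ᵥ (y - μ)) := by
      rw [hβ'd, ← hA, Matrix.mulVec_add, Matrix.mulVec_smul, hAA]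
    rw [h1, hyμ, hc]
    simp only [hA, ← Matrix.mulVec_mulVec, Matrix.mulVec_add, Matrix.mulVec_sub,
      Matrix.sub_mulVec, Matrix.smul_mulVec, Matrix.one_mulVec,
      Matrix.mulVec_smul, smul_add, smul_sub, smul_inv_smul₀ hκ0]
    abel
  -- second conclusion
  have hsecond : β' = κ⁻¹ • (A⁻¹ *ᵥ c) := by
    rw [← hkey, Matrix.mulVec_smul, Matrix.mulVec_mulVec, hAinv,
      Matrix.one_mulVec, inv_smul_smul₀ hκ0]
  refine ⟨?_, by simpa [hc] using hsecond⟩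
  -- canonical quadratic form for Qt
  have hBH : Xᵀ * S * W * X + H = κ • A := by
    simp only [H, hA, Matrix.mul_sub, Matrix.sub_mul, Matrix.mul_smul,
      Matrix.smul_mul, mul_one]
    simp only [Matrix.mul_one, mul_one]
    abel
  have hcHβt : c = (Xᵀ * S) *ᵥ u + H *ᵥ βt := by
    rw [hc]
    simp only [H, ← Matrix.mulVec_mulVec, Matrix.mulVec_add]
  have hQt : ∀ β, Qt β = β ⬝ᵥ c - κ/2 * (β ⬝ᵥ (A *ᵥ β))
      - (1/2) * (βt ⬝ᵥ (H *ᵥ βt)) := by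
    intro β
    have hsymH := symm_dot H hHsym β βt
    have hexp : (β - βt) ⬝ᵥ (H *ᵥ (β - βt))
        = β ⬝ᵥ (H *ᵥ β) - 2 * (β ⬝ᵥ (H *ᵥ βt)) + βt ⬝ᵥ (H *ᵥ βt) := by
      simp only [Matrix.mulVec_sub, sub_dotProduct, dotProduct_sub]
      rw [← hsymH]; ring
    have hquad : β ⬝ᵥ ((Xᵀ * S * W * X) *ᵥ β) + β ⬝ᵥ (H *ᵥ β)
        = κ * (β ⬝ᵥ (A *ᵥ β)) := by
      rw [← dotProduct_add, ← Matrix.add_mulVec, hBH,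
        Matrix.smul_mulVec, dotProduct_smul, smul_eq_mul]
    have hlin : β ⬝ᵥ c = β ⬝ᵥ ((Xᵀ * S) *ᵥ u) + β ⬝ᵥ (H *ᵥ βt) := by
      rw [hcHβt, dotProduct_add]
    simp only [Qt]
    rw [hexp, hlin]
    linarith [hquad]
  -- maximality
  intro β
  have hpsd : 0 ≤ (β' - β) ⬝ᵥ (A *ᵥ (β' - β)) := by
    set v := β' - β
    have h1 : A *ᵥ v = Xᵀ *ᵥ (S *ᵥ (X *ᵥ v)) := by
      rw [Matrix.mulVec_mulVec, Matrix.mulVec_mulVec]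
    rw [h1, Matrix.dotProduct_mulVec, Matrix.vecMul_transpose]
    simp only [dotProduct, Matrix.mulVec_diagonal, S]
    apply Finset.sum_nonneg
    intro i _
    have := hs i
    nlinarith [sq_nonneg ((X *ᵥ v) i)]
  have hdotc : ∀ w : Fin p → ℝ, w ⬝ᵥ c = κ * (w ⬝ᵥ (A *ᵥ β')) := by
    intro w
    rw [← hkey, dotProduct_smul, smul_eq_mul]
  have hsymA := symm_dot A hAsym β β'
  have hexp2 : (β' - β) ⬝ᵥ (A *ᵥ (β' - β))
      = β' ⬝ᵥ (A *ᵥ β') - 2 * (β ⬝ᵥ (A *ᵥ β')) + β ⬝ᵥ (A *ᵥ β) := by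
    simp only [Matrix.mulVec_sub, sub_dotProduct, dotProduct_sub]
    rw [← hsymA]; ring
  have hdiff : Qt β' - Qt β = κ/2 * ((β' - β) ⬝ᵥ (A *ᵥ (β' - β))) := by
    rw [hQt β, hQt β', hdotc β, hdotc β', hexp2]
    ring
  have h0 : 0 ≤ κ/2 * ((β' - β) ⬝ᵥ (A *ᵥ (β' - β))) :=
    mul_nonneg (by positivity) hpsd
  rw [← sub_nonneg, hdiff]
  exact h0
end

section
/- Let X be an n×p real matrix with rows xᵢ having full column rank p, sᵢ > 0 and mᵢ > 0 for all i, and β ∈ ℝᵖ. Define W(β) = diag(ω(xᵢᵀβ, mᵢ)) and R(β) = diag(mᵢ·π(xᵢᵀβ)(1 − π(xᵢᵀβ))), where π(t) = 1/(1 + exp(−t)). Then both E = XᵀSW(β)X and V = XᵀSR(β)X are symmetric positive definite, and the matrix A = V⁻¹ − E⁻¹ = (XᵀSR(β)X)⁻¹ − (XᵀSW(β)X)⁻¹ is symmetric positive semidefinite. (This is the key matrix comparison in the proof of Theorem 1, following from π(t)(1−π(t)) ≤ tanh(t/2)/(2t).) -/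
open Matrix

/-- The logistic function π(t) = 1/(1 + exp(−t)). -/
noncomputable def piLogit (t : ℝ) : ℝ := 1 / (1 + Real.exp (-t))

/-! Writing π(t)(1 − π(t)) = 1/(4 cosh²(t/2)) and sinh t = 2 sinh(t/2) cosh(t/2), the inequality
π(t)(1 − π(t)) ≤ tanh(t/2)/(2t) becomes t (sinh t − t) ≥ 0. Hence R(β) ≤ W(β) entrywise, so
V ≤ E in the Loewner order, and both are positive definite because X is injective.
Inversion reverses the Loewner order on positive definite matrices since
xᵀV⁻¹x = max_y (2xᵀy − yᵀVy), and the maximand only decreases when V is replaced by E ≥ V. -/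

section Logistic

open Real

lemma piLogit_mul_one_sub_piLogit (t : ℝ) :
    piLogit t * (1 - piLogit t) = 1 / (4 * cosh (t / 2) ^ 2) := by
  have h : exp (-t) = (exp (t / 2))⁻¹ ^ 2 := by
    rw [← exp_neg, ← exp_nat_mul]; ring_nf
  rw [piLogit, cosh_eq, h, exp_neg]
  field_simp
  ring

lemma piLogit_mul_one_sub_piLogit_pos (t : ℝ) : 0 < piLogit t * (1 - piLogit t) := by
  rw [piLogit_mul_one_sub_piLogit]
  positivity

lemma piLogit_mul_one_sub_piLogit_le (t : ℝ) (ht : t ≠ 0) :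
    piLogit t * (1 - piLogit t) ≤ tanh (t / 2) / (2 * t) := by
  have hsinh : sinh t = 2 * sinh (t / 2) * cosh (t / 2) := by
    rw [← sinh_two_mul]; ring_nf
  have hdiff : tanh (t / 2) / (2 * t) - 1 / (4 * cosh (t / 2) ^ 2)
      = (sinh t - t) * t / (4 * t ^ 2 * cosh (t / 2) ^ 2) := by
    rw [tanh_eq_sinh_div_cosh, hsinh]
    have := (cosh_pos (t / 2)).ne'
    field_simp
    ring
  have hnum : 0 ≤ (sinh t - t) * t := by
    rcases le_total 0 t with h | h
    · exact mul_nonneg (sub_nonneg.2 (self_le_sinh_iff.2 h)) h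
    · exact mul_nonneg_of_nonpos_of_nonpos (sub_nonpos.2 (sinh_le_self_iff.2 h)) h
  rw [piLogit_mul_one_sub_piLogit, ← sub_nonneg, hdiff]
  positivity

lemma mul_piLogit_mul_one_sub_piLogit_le_omegaPG (t : ℝ) {m : ℝ} (hm : 0 ≤ m) :
    m * (piLogit t * (1 - piLogit t)) ≤ omegaPG t m := by
  rw [omegaPG]
  split_ifs with ht
  · rw [piLogit_mul_one_sub_piLogit, ht]
    norm_num [div_eq_mul_one_div m]
  · rw [div_mul_eq_mul_div, mul_div_assoc]
    exact mul_le_mul_of_nonneg_left (piLogit_mul_one_sub_piLogit_le t ht) hm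

end Logistic

namespace Matrix

open scoped MatrixOrder ComplexOrder

lemma mulVec_injective_of_rank_eq_card {K m n : Type*} [Field K] [Fintype m] [Fintype n]
    {X : Matrix m n K} (hX : X.rank = Fintype.card n) : Function.Injective X.mulVec := by
  have h := LinearMap.finrank_range_add_finrank_ker X.mulVecLin
  rw [Module.finrank_fintype_fun_eq_card, ← rank, hX] at h
  rw [← coe_mulVecLin, ← LinearMap.ker_eq_bot, ← Submodule.finrank_eq_zero]
  omega

lemma conjTranspose_mul_diagonal_mul_mono {𝕜 m n : Type*} [RCLike 𝕜] [Fintype m] [Fintype n]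
    [DecidableEq m] (X : Matrix m n 𝕜) : Monotone fun d : m → 𝕜 => Xᴴ * diagonal d * X := by
  intro d e hde
  rw [le_iff, ← Matrix.sub_mul, ← Matrix.mul_sub, diagonal_sub]
  exact (PosSemidef.diagonal (sub_nonneg.2 hde)).conjTranspose_mul_mul_same X

variable {n : Type*} [Fintype n] [DecidableEq n]

lemma mulVec_nonsing_inv_mulVec {R : Type*} [CommRing R] {A : Matrix n n R} (hA : IsUnit A)
    (x : n → R) : A *ᵥ (A⁻¹ *ᵥ x) = x := by
  rw [mulVec_mulVec, mul_nonsing_inv _ ((isUnit_iff_isUnit_det A).1 hA), one_mulVec]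

lemma PosDef.two_mul_dotProduct_sub_le {V : Matrix n n ℝ} (hV : V.PosDef) (x y : n → ℝ) :
    2 * (x ⬝ᵥ y) - y ⬝ᵥ (V *ᵥ y) ≤ x ⬝ᵥ (V⁻¹ *ᵥ x) := by
  have hsymm : (V⁻¹ *ᵥ x) ⬝ᵥ (V *ᵥ y) = y ⬝ᵥ x := by
    rw [dotProduct_mulVec, ← mulVec_transpose, dotProduct_comm,
      ← conjTranspose_eq_transpose_of_trivial, hV.isHermitian.eq,
      mulVec_nonsing_inv_mulVec hV.isUnit]
  have h := hV.posSemidef.dotProduct_mulVec_nonneg (y - V⁻¹ *ᵥ x)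
  simp only [star_trivial, mulVec_sub, sub_dotProduct, dotProduct_sub,
    mulVec_nonsing_inv_mulVec hV.isUnit, hsymm, dotProduct_comm y x,
    dotProduct_comm (V⁻¹ *ᵥ x) x] at h
  linarith

lemma PosDef.inv_le_inv {V E : Matrix n n ℝ} (hV : V.PosDef) (hVE : V ≤ E) : E⁻¹ ≤ V⁻¹ := by
  have hE : E.PosDef := by simpa using hV.add_posSemidef (le_iff.1 hVE)
  refine le_iff.2 <| PosSemidef.of_dotProduct_mulVec_nonneg
    (hV.inv.isHermitian.sub hE.inv.isHermitian) fun x => ?_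
  rw [star_trivial, sub_mulVec, dotProduct_sub, sub_nonneg]
  set y := E⁻¹ *ᵥ x
  have hVy : y ⬝ᵥ (V *ᵥ y) ≤ y ⬝ᵥ (E *ᵥ y) := by
    simpa [sub_mulVec, dotProduct_sub] using (le_iff.1 hVE).dotProduct_mulVec_nonneg y
  calc x ⬝ᵥ y = 2 * (x ⬝ᵥ y) - y ⬝ᵥ (E *ᵥ y) := by
        rw [mulVec_nonsing_inv_mulVec hE.isUnit, dotProduct_comm y x]; ring
    _ ≤ 2 * (x ⬝ᵥ y) - y ⬝ᵥ (V *ᵥ y) := by linarith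
    _ ≤ x ⬝ᵥ (V⁻¹ *ᵥ x) := hV.two_mul_dotProduct_sub_le x y

end Matrix

open scoped MatrixOrder in
/-- Key matrix comparison in the proof of Theorem 1: if X has full column rank,
sᵢ > 0 and mᵢ > 0, then E = XᵀSW(β)X and V = XᵀSR(β)X are symmetric positive
definite and A = V⁻¹ − E⁻¹ is symmetric positive semidefinite. -/
theorem em_nr_information_matrix_comparison (n p : ℕ)
    (X : Matrix (Fin n) (Fin p) ℝ) (s m : Fin n → ℝ)
    (hs : ∀ i, 0 < s i) (hm : ∀ i, 0 < m i) (hrank : X.rank = p)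
    (β : Fin p → ℝ) :
    let W := Matrix.diagonal fun i => omegaPG ((X *ᵥ β) i) (m i)
    let R := Matrix.diagonal fun i =>
      m i * (piLogit ((X *ᵥ β) i) * (1 - piLogit ((X *ᵥ β) i)))
    (Xᵀ * Matrix.diagonal s * W * X).PosDef ∧
      (Xᵀ * Matrix.diagonal s * R * X).PosDef ∧
      ((Xᵀ * Matrix.diagonal s * R * X)⁻¹
        - (Xᵀ * Matrix.diagonal s * W * X)⁻¹).PosSemidef := by
  intro W R
  have hS : ∀ d, Xᵀ * diagonal s * diagonal d * X = Xᴴ * diagonal (fun i => s i * d i) * X := by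
    intro d
    rw [Matrix.mul_assoc Xᵀ, diagonal_mul_diagonal, conjTranspose_eq_transpose_of_trivial]
  simp only [W, R, hS]
  set r : Fin n → ℝ := fun i => s i * (m i * (piLogit ((X *ᵥ β) i) * (1 - piLogit ((X *ᵥ β) i))))
  set w : Fin n → ℝ := fun i => s i * omegaPG ((X *ᵥ β) i) (m i)
  have hX : Function.Injective X.mulVec := mulVec_injective_of_rank_eq_card (by simpa using hrank)
  have hr : ∀ i, 0 < r i := fun i =>
    mul_pos (hs i) (mul_pos (hm i) (piLogit_mul_one_sub_piLogit_pos _))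
  have hrw : r ≤ w := fun i => mul_le_mul_of_nonneg_left
    (mul_piLogit_mul_one_sub_piLogit_le_omegaPG _ (hm i).le) (hs i).le
  have hV : (Xᴴ * diagonal r * X).PosDef := (PosDef.diagonal hr).conjTranspose_mul_mul_same hX
  have hE : (Xᴴ * diagonal w * X).PosDef :=
    (PosDef.diagonal fun i => (hr i).trans_le (hrw i)).conjTranspose_mul_mul_same hX
  exact ⟨hE, hV, le_iff.1 (hV.inv_le_inv (conjTranspose_mul_diagonal_mul_mono X hrw))⟩
end

section
/- Let X be an n×p real matrix with rows xᵢ, S = diag(s₁,…,sₙ), counts mᵢ, responses yᵢ, π(t) = 1/(1 + exp(−t)), μ(ρ·Xβ)ᵢ = mᵢ·π(ρ·xᵢᵀβ), and R(β) = diag(mᵢ·π(xᵢᵀβ)(1 − π(xᵢᵀβ))). Suppose h : ℝᵖ → ℝ is differentiable in a neighborhood of β* ∈ ℝᵖ and satisfies the stationarity equation βᵀXᵀSy − βᵀXᵀS μ(h(β)·Xβ) = 0 for all β in that neighborhood, with h(β*) = 1, XᵀS(y − μ(Xβ*)) = 0, and c(β*) := (β*)ᵀXᵀSR(β*)Xβ*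 ≠ 0. Then the gradient of h at β* is ∇h(β*) = −c(β*)⁻¹ · XᵀSR(β*)Xβ*. (This is the implicit-function-theorem computation in the proof of Theorem 1.) -/
open Matrix

/-- The Newton-Raphson weight matrix R(β) = diag(mᵢ·π(xᵢᵀβ)(1 − π(xᵢᵀβ))). -/
noncomputable def Rmat (n p : ℕ) (X : Matrix (Fin n) (Fin p) ℝ)
    (m : Fin n → ℝ) (β : Fin p → ℝ) : Matrix (Fin n) (Fin n) ℝ :=
  Matrix.diagonal fun i =>
    m i * (piLogit ((X *ᵥ β) i) * (1 - piLogit ((X *ᵥ β) i)))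

/-!
Differentiate the stationarity identity `β ⬝ XᵀS(y − μ(h(β)·Xβ)) = 0` along the line
`βs + t v` at `t = 0`. Because `h(βs) = 1`, the term where only the outer `β` moves is
`v ⬝ XᵀS(y − μ(Xβs))`, which vanishes by the score equation. By the chain rule and
`π' = π(1 − π)` what remains is `−(∇h(βs) ⬝ v)·c(βs) − (XᵀSR(βs)Xβs) ⬝ v = 0`, and dividing by
`c(βs) ≠ 0` gives the gradient.
-/

open Filter Topology

lemma piLogit_eq_sigmoid : piLogit = Real.sigmoid :=
  funext fun _ => one_div _

lemma hasDerivAt_piLogit (t : ℝ) : HasDerivAt piLogit (piLogit t * (1 - piLogit t)) t := by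
  rw [piLogit_eq_sigmoid]
  exact Real.hasDerivAt_sigmoid t

section WeightedQuadraticForms

variable {ι κ R : Type*} [Fintype ι] [Fintype κ] [DecidableEq ι] [CommSemiring R]

lemma dotProduct_transpose_mul_diagonal_mulVec (X : Matrix ι κ R) (s g : ι → R) (z : κ → R) :
    z ⬝ᵥ ((Xᵀ * diagonal s) *ᵥ g) = ∑ i, s i * (X *ᵥ z) i * g i := by
  rw [← mulVec_mulVec, dotProduct_mulVec, vecMul_transpose, dotProduct]
  simp only [mulVec_diagonal]
  exact Finset.sum_congr rfl fun i _ => by ring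

lemma dotProduct_transpose_mul_diagonal_mul_diagonal_mul_mulVec (X : Matrix ι κ R)
    (s r : ι → R) (z β : κ → R) :
    z ⬝ᵥ ((Xᵀ * diagonal s * diagonal r * X) *ᵥ β)
      = ∑ i, s i * (X *ᵥ z) i * (r i * (X *ᵥ β) i) := by
  rw [← mulVec_mulVec, ← mulVec_mulVec, dotProduct_transpose_mul_diagonal_mulVec]
  simp only [mulVec_diagonal]

end WeightedQuadraticForms

lemma HasDerivAt.mul_sub_mul_piLogit {a c : ℝ → ℝ} {a' c' x : ℝ} (σ y m : ℝ)
    (ha : HasDerivAt a a' x) (hc : HasDerivAt c c' x) :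
    HasDerivAt (fun t => σ * a t * (y - m * piLogit (c t * a t)))
      (σ * (a' * (y - m * piLogit (c x * a x))
        - a x * (m * (piLogit (c x * a x) * (1 - piLogit (c x * a x))))
          * (c' * a x + c x * a'))) x := by
  have hπ := (hasDerivAt_piLogit (c x * a x)).comp x (hc.mul ha)
  exact ((ha.const_mul σ).mul ((hπ.const_mul m).const_sub y)).congr_deriv (by simp only [Function.comp_apply, Pi.mul_apply]; ring)

lemma hasDerivAt_score_along_line {n p : ℕ} (X : Matrix (Fin n) (Fin p) ℝ) (s m y : Fin n → ℝ)
    {h : (Fin p → ℝ) → ℝ} {h' : (Fin p → ℝ) →L[ℝ] ℝ} {β : Fin p → ℝ}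
    (hh : HasFDerivAt h h' β) (v : Fin p → ℝ) :
    HasDerivAt
      (fun t : ℝ => (β + t • v) ⬝ᵥ ((Xᵀ * diagonal s)
        *ᵥ (y - fun i => m i * piLogit (h (β + t • v) * (X *ᵥ (β + t • v)) i))))
      (v ⬝ᵥ ((Xᵀ * diagonal s) *ᵥ (y - fun i => m i * piLogit (h β * (X *ᵥ β) i)))
        - h' v * (β ⬝ᵥ ((Xᵀ * diagonal s * Rmat n p X m (h β • β) * X) *ᵥ β))
        - h β * (((Xᵀ * diagonal s * Rmat n p X m (h β • β) * X) *ᵥ β) ⬝ᵥ v)) 0 := by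
  have hline : HasDerivAt (fun t : ℝ => β + t • v) v 0 := by
    simpa using ((hasDerivAt_id (0 : ℝ)).smul_const v).const_add β
  have hh_line : HasDerivAt (fun t : ℝ => h (β + t • v)) (h' v) 0 :=
    hh.comp_hasDerivAt_of_eq 0 hline (by simp)
  have hX_line (i : Fin n) : HasDerivAt (fun t : ℝ => (X *ᵥ (β + t • v)) i) ((X *ᵥ v) i) 0 := by
    simp only [mulVec_add, mulVec_smul, Pi.add_apply, Pi.smul_apply, smul_eq_mul]
    simpa using ((hasDerivAt_id (0 : ℝ)).mul_const ((X *ᵥ v) i)).const_add ((X *ᵥ β) i)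
  have hsum := HasDerivAt.fun_sum (u := Finset.univ) fun i _ =>
    (hX_line i).mul_sub_mul_piLogit (s i) (y i) (m i) hh_line
  simp only [zero_smul, add_zero] at hsum
  simp only [dotProduct_transpose_mul_diagonal_mulVec, Pi.sub_apply]
  rw [dotProduct_comm _ v, Rmat, dotProduct_transpose_mul_diagonal_mul_diagonal_mul_mulVec,
    dotProduct_transpose_mul_diagonal_mul_diagonal_mul_mulVec]
  refine hsum.congr_deriv ?_
  simp only [mulVec_smul, Pi.smul_apply, smul_eq_mul, Finset.mul_sum, ← Finset.sum_sub_distrib]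
  exact Finset.sum_congr rfl fun i _ => by ring

/-- Implicit-function-theorem computation in the proof of Theorem 1: the
gradient of the optimal rescaling map h at β* is
∇h(β*) = −c(β*)⁻¹·XᵀSR(β*)Xβ*, where c(β*) = (β*)ᵀXᵀSR(β*)Xβ*. -/
theorem gradient_of_optimal_rescaling (n p : ℕ) (X : Matrix (Fin n) (Fin p) ℝ)
    (s m y : Fin n → ℝ) (h : (Fin p → ℝ) → ℝ) (βs : Fin p → ℝ)
    (U : Set (Fin p → ℝ)) (hU : U ∈ nhds βs)
    (hdiff : ∀ β ∈ U, DifferentiableAt ℝ h β)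
    (hstat : ∀ β ∈ U,
      β ⬝ᵥ ((Xᵀ * Matrix.diagonal s) *ᵥ y)
        - β ⬝ᵥ ((Xᵀ * Matrix.diagonal s)
            *ᵥ fun i => m i * piLogit (h β * (X *ᵥ β) i)) = 0)
    (hhs : h βs = 1)
    (hscore : (Xᵀ * Matrix.diagonal s)
      *ᵥ (y - fun i => m i * piLogit ((X *ᵥ βs) i)) = 0)
    (hc : βs ⬝ᵥ ((Xᵀ * Matrix.diagonal s * Rmat n p X m βs * X) *ᵥ βs) ≠ 0) :
    ∀ v : Fin p → ℝ,
      fderiv ℝ h βs v =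
        (-(βs ⬝ᵥ ((Xᵀ * Matrix.diagonal s * Rmat n p X m βs * X) *ᵥ βs))⁻¹
          • ((Xᵀ * Matrix.diagonal s * Rmat n p X m βs * X) *ᵥ βs)) ⬝ᵥ v := by
  intro v
  have hderiv := hasDerivAt_score_along_line X s m y
    (hdiff βs (mem_of_mem_nhds hU)).hasFDerivAt v
  simp only [hhs, one_smul, one_mul] at hderiv
  have hline_mem : ∀ᶠ t : ℝ in 𝓝 0, βs + t • v ∈ U := by
    have hcont : Tendsto (fun t : ℝ => βs + t • v) (𝓝 0) (𝓝 βs) := by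
      simpa using (by fun_prop : Continuous fun t : ℝ => βs + t • v).tendsto 0
    exact hcont.eventually_mem hU
  have hzero := hderiv.unique <| (hasDerivAt_const (0 : ℝ) (0 : ℝ)).congr_of_eventuallyEq <|
    hline_mem.mono fun t ht => by simpa only [mulVec_sub, dotProduct_sub] using hstat _ ht
  rw [hscore, dotProduct_zero] at hzero
  rw [smul_dotProduct, smul_eq_mul]
  field_simp
  linarith
end
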